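/- (Proposition 4.1(iii)) Let X₁, X₂, … be an infinite sequence of independent random points, each uniformly distributed on the unit sphere S² ⊂ ℝ³. Fix c > 0 and α > 3, and for each N with c/N^α < 1 set p_N = c/N^α and a_N = 2·arcsin(√p_N). Let G_N be the random intersection graph on vertex set {1,…,N} built from X₁,…,X_N with caps of angular radius a_N. Then almost surely, for all sufficiently large N, the graph G_N has no edges, i.e., every vertex of G_N is isolated. -/

import Mathlib

open MeasureTheory Real Set
open scoped ENNReal RealInnerProductSpace

/-- The unit sphere `S²` in `ℝ³`. -/
noncomputable def S2 : Set (EuclideanSpace ℝ (Fin 3)) :=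
  Metric.sphere (0 : EuclideanSpace ℝ (Fin 3)) 1

/-- The uniform probability measure on the unit sphere `S² ⊂ ℝ³`: the rotation-invariant
surface (2-dimensional Hausdorff) measure restricted to the sphere, normalized by the total
surface area `4π`. -/
noncomputable def sphereUniform : Measure (EuclideanSpace ℝ (Fin 3)) :=
  (ENNReal.ofReal (4 * π))⁻¹ •
    (μH[2] : Measure (EuclideanSpace ℝ (Fin 3))).restrict S2

/-- The angular distance `θ(x,y) = arccos ⟪x,y⟫` between two points of the sphere. -/
noncomputable def angDist (x y : EuclideanSpace ℝ (Fin 3)) : ℝ :=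
  Real.arccos ⟪x, y⟫


/-! Two independent uniform points are within angular distance `4 a_N` with probability at most
the normalized area of a cap of angular radius `4 a_N`. Radial projection of a disk in the tangent
plane covers the cap and is 2-Lipschitz, so that area is `O(p_N)`. A union bound over the `N²`
pairs shows that `G_N` has an edge with probability `O(N^(2-α))`, which is summable for `α > 3`,
and Borel–Cantelli concludes. -/

open scoped NNReal

theorem lipschitzOnWith_inv_norm_smul {E : Type*} [NormedAddCommGroup E] [NormedSpace ℝ E] :
    LipschitzOnWith 2 (fun w : E => ‖w‖⁻¹ • w) {w | 1 ≤ ‖w‖} := by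
  refine LipschitzOnWith.of_dist_le_mul fun w (hw : 1 ≤ ‖w‖) w' (hw' : 1 ≤ ‖w'‖) => ?_
  have ha : 0 < ‖w‖ := one_pos.trans_le hw
  have hb : 0 < ‖w'‖ := one_pos.trans_le hw'
  have hsplit : ‖w‖⁻¹ • w - ‖w'‖⁻¹ • w' = ‖w‖⁻¹ • (w - w') + (‖w‖⁻¹ - ‖w'‖⁻¹) • w' := by
    rw [smul_sub, sub_smul]; abel
  have hcoef : ‖(‖w‖⁻¹ - ‖w'‖⁻¹) • w'‖ = ‖w‖⁻¹ * |‖w'‖ - ‖w‖| := by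
    rw [norm_smul, Real.norm_eq_abs, inv_sub_inv ha.ne' hb.ne', abs_div, abs_of_pos (mul_pos ha hb)]
    field_simp
  rw [dist_eq_norm, dist_eq_norm, hsplit]
  calc ‖‖w‖⁻¹ • (w - w') + (‖w‖⁻¹ - ‖w'‖⁻¹) • w'‖
      ≤ ‖w‖⁻¹ * ‖w - w'‖ + ‖w‖⁻¹ * |‖w'‖ - ‖w‖| := by
        refine (norm_add_le _ _).trans_eq ?_
        rw [hcoef, norm_smul, norm_inv, norm_norm]
    _ ≤ 1 * ‖w - w'‖ + 1 * ‖w - w'‖ := by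
        gcongr
        · exact inv_le_one_of_one_le₀ hw
        · exact inv_le_one_of_one_le₀ hw
        · rw [norm_sub_rev w w']; exact abs_norm_sub_norm_le w' w
    _ = (2 : ℝ≥0) * ‖w - w'‖ := by push_cast; ring

theorem hausdorffMeasure_closedBall_euclideanSpace_le (n : ℕ) {R : ℝ} (hR : 0 ≤ R) :
    μH[n] (Metric.closedBall (0 : EuclideanSpace ℝ (Fin n)) R) ≤
      ENNReal.ofReal ((2 * √n * R) ^ n) := by
  have hsub : Metric.closedBall (0 : EuclideanSpace ℝ (Fin n)) R ⊆
      WithLp.ofLp ⁻¹' Metric.closedBall 0 R := fun y hy => by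
    simpa using (PiLp.lipschitzWith_ofLp 2 _).dist_le_mul y 0 |>.trans (by simpa using hy)
  calc μH[n] (Metric.closedBall (0 : EuclideanSpace ℝ (Fin n)) R)
      ≤ μH[n] (WithLp.ofLp ⁻¹' Metric.closedBall (0 : Fin n → ℝ) R) := measure_mono hsub
    _ ≤ _ := (PiLp.antilipschitzWith_ofLp 2 _).hausdorffMeasure_preimage_le (by positivity) _
    _ = ENNReal.ofReal ((2 * √n * R) ^ n) := by
      rw [show ((n : ℕ) : ℝ) = (Fintype.card (Fin n) : ℝ) by simp, hausdorffMeasure_pi_real,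
        Real.volume_pi_closedBall _ hR]
      simp only [Fintype.card_fin, ENNReal.rpow_natCast]
      rw [← ENNReal.ofReal_coe_nnreal, ← ENNReal.ofReal_pow (by positivity),
        ← ENNReal.ofReal_mul (by positivity), ← mul_pow]
      norm_num [Real.sqrt_eq_rpow]
      ring_nf

section Cap

variable {E : Type*} [NormedAddCommGroup E] [InnerProductSpace ℝ E]

-- `√(κ⁻¹ ^ 2 - 1) = tan (arccos κ)`
theorem sphere_inter_inner_ge_subset_image {x : E} (hx : ‖x‖ = 1) {κ : ℝ} (hκ : 0 < κ) :
    {y : E | ‖y‖ = 1 ∧ κ ≤ ⟪x, y⟫} ⊆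
      (fun w : E => ‖w‖⁻¹ • w) '' {w | ⟪x, w⟫ = 1 ∧ ‖w - x‖ ≤ √(κ⁻¹ ^ 2 - 1)} := by
  rintro y ⟨hy, hκy⟩
  have ha : 0 < ⟪x, y⟫ := hκ.trans_le hκy
  have hnorm : ‖⟪x, y⟫⁻¹ • y‖ = ⟪x, y⟫⁻¹ := by
    rw [norm_smul, hy, mul_one, Real.norm_of_nonneg (inv_nonneg.2 ha.le)]
  have hinner : ⟪x, ⟪x, y⟫⁻¹ • y⟫ = 1 := by
    rw [real_inner_smul_right, inv_mul_cancel₀ ha.ne']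
  refine ⟨⟪x, y⟫⁻¹ • y, ⟨hinner, ?_⟩, ?_⟩
  · have hdist : ‖⟪x, y⟫⁻¹ • y - x‖ ^ 2 = ⟪x, y⟫⁻¹ ^ 2 - 1 := by
      rw [norm_sub_sq_real, hnorm, real_inner_comm (x := x), hinner, hx]; ring
    rw [← abs_norm]
    refine Real.abs_le_sqrt (hdist.trans_le ?_)
    gcongr
  · simp only [hnorm, inv_inv, smul_smul, mul_inv_cancel₀ ha.ne', one_smul]

variable [MeasurableSpace E] [BorelSpace E] (n : ℕ) [Fact (Module.finrank ℝ E = n + 1)]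

theorem hausdorffMeasure_tangentDisk_le {x : E} (hx : ‖x‖ = 1) {R : ℝ} (hR : 0 ≤ R) :
    μH[n] {w : E | ⟪x, w⟫ = 1 ∧ ‖w - x‖ ≤ R} ≤ ENNReal.ofReal ((2 * √n * R) ^ n) := by
  have hx0 : x ≠ 0 := norm_ne_zero_iff.1 (by simp [hx])
  let L := (OrthonormalBasis.fromOrthogonalSpanSingleton (𝕜 := ℝ) n hx0).repr.symm
  let f : EuclideanSpace ℝ (Fin n) → E := fun u => x + (L u : E)
  have hf : Isometry f := (isometry_add_left x).comp (isometry_subtype_coe.comp L.isometry)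
  have hsub : {w : E | ⟪x, w⟫ = 1 ∧ ‖w - x‖ ≤ R} ⊆ f '' Metric.closedBall 0 R := by
    rintro w ⟨hw, hwR⟩
    have hperp : w - x ∈ (ℝ ∙ x)ᗮ := by
      rw [Submodule.mem_orthogonal_singleton_iff_inner_right, inner_sub_right, hw,
        real_inner_self_eq_norm_sq, hx]
      norm_num
    refine ⟨L.symm ⟨w - x, hperp⟩, ?_, ?_⟩
    · simpa [LinearIsometryEquiv.norm_map] using hwR
    · simp [f]
  calc μH[n] {w : E | ⟪x, w⟫ = 1 ∧ ‖w - x‖ ≤ R}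
      ≤ μH[n] (f '' Metric.closedBall 0 R) := measure_mono hsub
    _ = μH[n] (Metric.closedBall (0 : EuclideanSpace ℝ (Fin n)) R) :=
      hf.hausdorffMeasure_image (Or.inl n.cast_nonneg) _
    _ ≤ ENNReal.ofReal ((2 * √n * R) ^ n) := hausdorffMeasure_closedBall_euclideanSpace_le n hR

theorem hausdorffMeasure_sphere_inter_inner_ge_le {x : E} (hx : ‖x‖ = 1) {κ : ℝ} (hκ : 0 < κ) :
    μH[n] {y : E | ‖y‖ = 1 ∧ κ ≤ ⟪x, y⟫} ≤
      2 ^ n * ENNReal.ofReal ((2 * √n * √(κ⁻¹ ^ 2 - 1)) ^ n) := by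
  have hdisk : {w : E | ⟪x, w⟫ = 1 ∧ ‖w - x‖ ≤ √(κ⁻¹ ^ 2 - 1)} ⊆ {w | 1 ≤ ‖w‖} :=
    fun w ⟨hw, _⟩ => by simpa [hw, hx] using real_inner_le_norm x w
  calc μH[n] {y : E | ‖y‖ = 1 ∧ κ ≤ ⟪x, y⟫}
      ≤ μH[n] ((fun w : E => ‖w‖⁻¹ • w) ''
          {w | ⟪x, w⟫ = 1 ∧ ‖w - x‖ ≤ √(κ⁻¹ ^ 2 - 1)}) :=
        measure_mono (sphere_inter_inner_ge_subset_image hx hκ)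
    _ ≤ (2 : ℝ≥0) ^ (n : ℝ) * μH[n] {w : E | ⟪x, w⟫ = 1 ∧ ‖w - x‖ ≤ √(κ⁻¹ ^ 2 - 1)} :=
        (lipschitzOnWith_inv_norm_smul.mono hdisk).hausdorffMeasure_image_le n.cast_nonneg
    _ ≤ 2 ^ n * ENNReal.ofReal ((2 * √n * √(κ⁻¹ ^ 2 - 1)) ^ n) := by
        rw [ENNReal.rpow_natCast]
        gcongr
        · simp
        · exact hausdorffMeasure_tangentDisk_le n hx (Real.sqrt_nonneg _)

end Cap

theorem MeasureTheory.Measure.prod_apply_le_of_ae_le {α β : Type*} [MeasurableSpace α]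
    [MeasurableSpace β] {μ : Measure α} [IsProbabilityMeasure μ] {ν : Measure β} [SFinite ν]
    {s : Set (α × β)} (hs : MeasurableSet s) {C : ℝ≥0∞}
    (h : ∀ᵐ x ∂μ, ν (Prod.mk x ⁻¹' s) ≤ C) : μ.prod ν s ≤ C := by
  rw [Measure.prod_apply hs]
  exact (lintegral_mono_ae h).trans_eq (by simp)


theorem ProbabilityTheory.IndepFun.measure_preimage_prodMk {Ω α β : Type*} [MeasurableSpace Ω]
    [MeasurableSpace α] [MeasurableSpace β] {P : Measure Ω} [IsFiniteMeasure P] {Y : Ω → α}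
    {Z : Ω → β} (h : ProbabilityTheory.IndepFun Y Z P) (hY : Measurable Y) (hZ : Measurable Z)
    {s : Set (α × β)} (hs : MeasurableSet s) :
    P ((fun ω => (Y ω, Z ω)) ⁻¹' s) = (P.map Y).prod (P.map Z) s := by
  rw [← (ProbabilityTheory.indepFun_iff_map_prod_eq_prod_map_map hY.aemeasurable
    hZ.aemeasurable).1 h, Measure.map_apply (hY.prodMk hZ) hs]

theorem ae_eventually_forall_pairs_notMem {Ω : Type*} [MeasurableSpace Ω] (P : Measure Ω)
    {B : ℕ → ℕ → ℕ → Set Ω} {q : ℕ → ℝ≥0∞} (hB : ∀ N i j, i ≠ j → P (B N i j) ≤ q N)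
    (hq : ∑' N : ℕ, (N : ℝ≥0∞) ^ 2 * q N ≠ ∞) :
    ∀ᵐ ω ∂P, ∀ᶠ N in Filter.atTop, ∀ i < N, ∀ j < N, i ≠ j → ω ∉ B N i j := by
  let A N := ⋃ ij ∈ (Finset.range N).offDiag, B N ij.1 ij.2
  have hA : ∀ N, P (A N) ≤ (N : ℝ≥0∞) ^ 2 * q N := fun N =>
    calc P (A N) ≤ ∑ ij ∈ (Finset.range N).offDiag, P (B N ij.1 ij.2) :=
          measure_biUnion_finset_le _ _
      _ ≤ ∑ _ij ∈ (Finset.range N).offDiag, q N :=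
          Finset.sum_le_sum fun ij hij => hB _ _ _ (Finset.mem_offDiag.1 hij).2.2
      _ ≤ ∑ _ij ∈ Finset.range N ×ˢ Finset.range N, q N :=
          Finset.sum_le_sum_of_subset fun ij hij =>
            Finset.mem_product.2 ⟨(Finset.mem_offDiag.1 hij).1, (Finset.mem_offDiag.1 hij).2.1⟩
      _ = (N : ℝ≥0∞) ^ 2 * q N := by simp [sq]
  filter_upwards [ae_eventually_notMem (ne_top_of_le_ne_top hq (ENNReal.tsum_le_tsum hA))]
    with ω hω
  refine hω.mono fun N hN i hi j hj hij hB => hN ?_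
  exact Set.mem_biUnion (x := (i, j)) (by simp [hi, hj, hij]) hB

theorem tsum_sq_mul_ofReal_div_rpow_ne_top (c : ℝ) {α : ℝ} (hα : 3 < α) :
    ∑' N : ℕ, (N : ℝ≥0∞) ^ 2 * ENNReal.ofReal (c / (N : ℝ) ^ α) ≠ ∞ := by
  have hsum : Summable fun N : ℕ => (N : ℝ) ^ 2 * (c / (N : ℝ) ^ α) := by
    refine ((Real.summable_nat_rpow.2 (by linarith : 2 - α < -1)).mul_left c).congr fun N => ?_
    rcases N.eq_zero_or_pos with rfl | hN
    · simp [Real.zero_rpow (by linarith : 2 - α ≠ 0)]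
    · rw [Real.rpow_sub (by positivity), Real.rpow_two]
      ring
  have hterm : ∀ N : ℕ, (N : ℝ≥0∞) ^ 2 * ENNReal.ofReal (c / (N : ℝ) ^ α) =
      ENNReal.ofReal ((N : ℝ) ^ 2 * (c / (N : ℝ) ^ α)) := fun N => by
    rw [ENNReal.ofReal_mul (by positivity), ENNReal.ofReal_pow N.cast_nonneg,
      ENNReal.ofReal_natCast]
  simp_rw [hterm, ENNReal.ofReal]
  exact ENNReal.tsum_coe_ne_top_iff_summable.2 hsum.toNNReal

theorem cos_four_mul_arcsin_sqrt {p : ℝ} (hp0 : 0 ≤ p) (hp1 : p ≤ 1) :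
    cos (2 * (2 * arcsin √p)) = 1 - 8 * p * (1 - p) := by
  have hsin : sin (2 * arcsin √p) ^ 2 = 4 * p * (1 - p) := by
    rw [sin_two_mul, sin_arcsin (by linarith [Real.sqrt_nonneg p]) (Real.sqrt_le_one.2 hp1),
      cos_arcsin, Real.sq_sqrt hp0, mul_pow, mul_pow, Real.sq_sqrt hp0,
      Real.sq_sqrt (by linarith)]
    ring
  rw [cos_two_mul, cos_sq', hsin]
  ring

theorem measurableSet_S2 : MeasurableSet S2 :=
  Metric.isClosed_sphere.measurableSet

theorem measurableSet_angDist_le (t : ℝ) :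
    MeasurableSet {z : EuclideanSpace ℝ (Fin 3) × EuclideanSpace ℝ (Fin 3) | angDist z.1 z.2 ≤ t} :=
  measurableSet_le (by unfold angDist; fun_prop) measurable_const

theorem sphereUniform_angDist_le_le {x : EuclideanSpace ℝ (Fin 3)} (hx : ‖x‖ = 1) {t : ℝ}
    (htπ : t ≤ π) (hcos : 0 < cos t) :
    sphereUniform {y | angDist x y ≤ t} ≤ ENNReal.ofReal (32 * ((cos t)⁻¹ ^ 2 - 1)) := by
  have : Fact (Module.finrank ℝ (EuclideanSpace ℝ (Fin 3)) = 2 + 1) := ⟨finrank_euclideanSpace_fin⟩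
  have hsub : {y | angDist x y ≤ t} ∩ S2 ⊆ {y | ‖y‖ = 1 ∧ cos t ≤ ⟪x, y⟫} := by
    rintro y ⟨hyt, hy⟩
    have hy : ‖y‖ = 1 := mem_sphere_zero_iff_norm.1 hy
    have hxy := abs_le.1 ((abs_real_inner_le_norm x y).trans_eq (by rw [hx, hy, one_mul]))
    refine ⟨hy, ?_⟩
    simpa [cos_arccos hxy.1 hxy.2] using
      cos_le_cos_of_nonneg_of_le_pi (arccos_nonneg _) htπ hyt
  have htan_sq : 0 ≤ (cos t)⁻¹ ^ 2 - 1 := by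
    have := one_le_inv₀ hcos |>.2 (cos_le_one t)
    nlinarith
  calc sphereUniform {y | angDist x y ≤ t}
      = (ENNReal.ofReal (4 * π))⁻¹ * μH[2] ({y | angDist x y ≤ t} ∩ S2) := by
        rw [sphereUniform, Measure.smul_apply, smul_eq_mul,
          Measure.restrict_apply' measurableSet_S2]
    _ ≤ 1 * (2 ^ 2 * ENNReal.ofReal ((2 * √(2 : ℕ) * √((cos t)⁻¹ ^ 2 - 1)) ^ 2)) := by
        gcongr
        · exact ENNReal.inv_le_one.2 (ENNReal.one_le_ofReal.2 (by linarith [pi_gt_three]))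
        · exact (measure_mono hsub).trans (hausdorffMeasure_sphere_inter_inner_ge_le 2 hx hcos)
    _ = ENNReal.ofReal (32 * ((cos t)⁻¹ ^ 2 - 1)) := by
        rw [one_mul, show (2 : ℝ≥0∞) ^ 2 = ENNReal.ofReal 4 by norm_num,
          ← ENNReal.ofReal_mul (by norm_num), mul_pow, mul_pow, Real.sq_sqrt htan_sq]
        norm_num
        ring_nf

theorem sphereUniform_angDist_le_four_mul_arcsin_le [IsProbabilityMeasure sphereUniform]
    {x : EuclideanSpace ℝ (Fin 3)} (hx : ‖x‖ = 1) {p : ℝ} (hp : 0 ≤ p) :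
    sphereUniform {y | angDist x y ≤ 2 * (2 * arcsin √p)} ≤ ENNReal.ofReal (2048 * p) := by
  rcases le_or_gt (1 / 16) p with hbig | hsmall
  · exact prob_le_one.trans (ENNReal.one_le_ofReal.2 (by linarith))
  have hcos := cos_four_mul_arcsin_sqrt hp (by linarith)
  have hcos_gt : 1 / 2 < 1 - 8 * p * (1 - p) := by nlinarith
  have hcos_gap : 1 - (1 - 8 * p * (1 - p)) ≤ 8 * p := by nlinarith
  have hsqrt : √p ≤ sin (π / 4) := by
    rw [sin_pi_div_four, Real.sqrt_le_iff, div_pow, Real.sq_sqrt zero_le_two]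
    constructor <;> linarith [Real.sqrt_nonneg 2]
  have harcsin : arcsin √p ≤ π / 4 :=
    (arcsin_le_iff_le_sin' ⟨by linarith [pi_pos], by linarith [pi_pos]⟩).2 hsqrt
  refine (sphereUniform_angDist_le_le hx (by linarith) (by linarith)).trans
    (ENNReal.ofReal_le_ofReal ?_)
  rw [hcos, inv_pow, ← one_div, div_sub_one (by positivity), mul_div_assoc',
    div_le_iff₀ (by positivity)]
  generalize 1 - 8 * p * (1 - p) = κ at hcos_gt hcos_gap ⊢
  nlinarith [mul_le_mul_of_nonneg_left hcos_gt.le hp]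

theorem sphereUniform_prod_angDist_le_four_mul_arcsin_le [IsProbabilityMeasure sphereUniform]
    {p : ℝ} (hp : 0 ≤ p) :
    (sphereUniform.prod sphereUniform) {z | angDist z.1 z.2 ≤ 2 * (2 * arcsin √p)} ≤
      ENNReal.ofReal (2048 * p) := by
  refine Measure.prod_apply_le_of_ae_le (measurableSet_angDist_le _) ?_
  have hS2 : ∀ᵐ x ∂sphereUniform, x ∈ S2 :=
    Measure.ae_smul_measure (ae_restrict_mem measurableSet_S2) _
  filter_upwards [hS2] with x hx
  exact sphereUniform_angDist_le_four_mul_arcsin_le (mem_sphere_zero_iff_norm.1 hx) hp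

/-- Proposition 4.1(iii): for `c > 0` and `α > 3`, with `p_N = c/N^α` and cap radius
`a_N = 2·arcsin √p_N`, almost surely, for all sufficiently large `N`, the random
intersection graph `G_N` has no edges, i.e. every vertex is isolated. -/
theorem all_vertices_isolated_eventually
    (c α : ℝ) (hc : 0 < c) (hα : 3 < α)
    {Ω : Type*} [MeasurableSpace Ω] (P : Measure Ω) [IsProbabilityMeasure P]
    (X : ℕ → Ω → EuclideanSpace ℝ (Fin 3))
    (hmeas : ∀ i, Measurable (X i))
    (hindep : ProbabilityTheory.iIndepFun X P)
    (hdist : ∀ i, Measure.map (X i) P = sphereUniform) :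
    ∀ᵐ ω ∂P, ∀ᶠ N : ℕ in Filter.atTop, ∀ i < N, ∀ j < N, i ≠ j →
      2 * (2 * Real.arcsin (Real.sqrt (c / (N : ℝ) ^ α))) <
        angDist (X i ω) (X j ω) := by
  have : IsProbabilityMeasure sphereUniform :=
    hdist 0 ▸ Measure.isProbabilityMeasure_map (hmeas 0).aemeasurable
  have hpair : ∀ (N : ℕ) i j, i ≠ j →
      P {ω | angDist (X i ω) (X j ω) ≤ 2 * (2 * arcsin √(c / (N : ℝ) ^ α))} ≤
        ENNReal.ofReal (2048 * c / (N : ℝ) ^ α) := fun N i j hij => by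
    have hlaw := (hindep.indepFun hij).measure_preimage_prodMk (hmeas i) (hmeas j)
      (measurableSet_angDist_le (2 * (2 * arcsin √(c / (N : ℝ) ^ α))))
    rw [hdist i, hdist j] at hlaw
    rw [mul_div_assoc]
    exact hlaw.trans_le (sphereUniform_prod_angDist_le_four_mul_arcsin_le (by positivity))
  filter_upwards [ae_eventually_forall_pairs_notMem P hpair
    (tsum_sq_mul_ofReal_div_rpow_ne_top _ hα)] with ω hω
  exact hω.mono fun N hN i hi j hj hij => not_le.1 (hN i hi j hj hij)
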